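/- arXiv:2408.08163 — 9 statements merged into one kernel-verified Lean document; each statement's English description precedes it below -/
import Mathlib

section
/- For all real a with 2 ≤ a ≤ 3 and all real x ≥ t > 0, one has (x + 2t/a)^a ≥ x^a + t·x^(a-1) + (2t²/a)·x^(a-2). -/
/-! Bernoulli's inequality `(x + h)^a ≥ x^a + a h x^(a-1)` with `h = 2t/a` produces the term
`2t·x^(a-1)`; half of it already dominates `(2t²/a)·x^(a-2)` because `2t/a ≤ t ≤ x`. -/

open Real

theorem rpow_add_mul_rpow_sub_one_le_rpow_add {x h p : ℝ} (hx : 0 < x) (hh : -x ≤ h)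
    (hp : 1 ≤ p) : x ^ p + p * h * x ^ (p - 1) ≤ (x + h) ^ p := by
  have hs : -1 ≤ h / x := by rwa [le_div_iff₀ hx, neg_one_mul]
  have hbase : x + h = x * (1 + h / x) := by field_simp
  calc x ^ p + p * h * x ^ (p - 1) = x ^ p * (1 + p * (h / x)) := by
        rw [rpow_sub_one hx.ne']; field_simp
    _ ≤ x ^ p * (1 + h / x) ^ p :=
        mul_le_mul_of_nonneg_left (one_add_mul_self_le_rpow_one_add hs hp) (rpow_nonneg hx.le p)
    _ = (x + h) ^ p := by rw [hbase, mul_rpow hx.le (by linarith)]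

theorem mul_rpow_sub_two_le_rpow_sub_one {x c : ℝ} (p : ℝ) (hx : 0 < x) (hc : c ≤ x) :
    c * x ^ (p - 2) ≤ x ^ (p - 1) := by
  calc c * x ^ (p - 2) ≤ x * x ^ (p - 2) :=
        mul_le_mul_of_nonneg_right hc (rpow_nonneg hx.le _)
    _ = x ^ (p - 1) := by
        rw [mul_comm, ← rpow_add_one hx.ne']; ring_nf

theorem stmt_5_general (a x t : ℝ) (ha2 : 2 ≤ a) (ht : 0 < t) (hxt : t ≤ x) :
    x ^ a + t * x ^ (a - 1) + 2 * t ^ 2 / a * x ^ (a - 2) ≤ (x + 2 * t / a) ^ a := by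
  have hx : 0 < x := ht.trans_le hxt
  have hstep : 0 ≤ 2 * t / a := by positivity
  have hstep_le : 2 * t / a ≤ x := by
    rw [div_le_iff₀ (by linarith)]; nlinarith
  have bernoulli := rpow_add_mul_rpow_sub_one_le_rpow_add hx (by linarith : -x ≤ 2 * t / a)
    (by linarith : (1 : ℝ) ≤ a)
  have hcoef : a * (2 * t / a) = 2 * t := by field_simp
  have hlower : 2 * t ^ 2 / a * x ^ (a - 2) ≤ t * x ^ (a - 1) := by
    calc 2 * t ^ 2 / a * x ^ (a - 2) = t * (2 * t / a * x ^ (a - 2)) := by ring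
      _ ≤ t * x ^ (a - 1) :=
          mul_le_mul_of_nonneg_left (mul_rpow_sub_two_le_rpow_sub_one a hx hstep_le) ht.le
  rw [hcoef] at bernoulli
  linarith

theorem stmt_5 (a x t : ℝ) (ha2 : 2 ≤ a) (ha3 : a ≤ 3) (ht : 0 < t) (hxt : t ≤ x) :
    x ^ a + t * x ^ (a - 1) + 2 * t ^ 2 / a * x ^ (a - 2) ≤ (x + 2 * t / a) ^ a :=
  stmt_5_general a x t ha2 ht hxt
end

section
/- For all real a with 2 ≤ a ≤ 3 and all real x ≥ t > 0, one has (x - t/a)^a ≤ x^a - t·x^(a-1) + (t²/a)·x^(a-2). -/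
/-
Write x - t/a = x(1 - s) with s = t/(ax) ∈ (0, 1]; by homogeneity it suffices that
(1 - s)^a ≤ 1 - as + as². Split (1 - s)^a = (1 - s)² (1 - s)^(a-2) and apply Bernoulli's
inequality (1 - s)^(a-2) ≤ 1 - (a-2)s, valid since 0 ≤ a - 2 ≤ 1. The resulting cubic bound
differs from 1 - as + as² by (a - 3)s² - (a - 2)s³ ≤ 0.
-/

open Real

theorem one_sub_rpow_le_of_two_le_of_le_three {a s : ℝ} (ha2 : 2 ≤ a) (ha3 : a ≤ 3)
    (hs0 : 0 ≤ s) (hs1 : s ≤ 1) : (1 - s) ^ a ≤ 1 - a * s + a * s ^ 2 := by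
  have h1s : 0 ≤ 1 - s := by linarith
  have bernoulli : (1 - s) ^ (a - 2) ≤ 1 + (a - 2) * -s := by
    simpa [sub_eq_add_neg] using
      rpow_one_add_le_one_add_mul_self (s := -s) (by linarith) (by linarith) (by linarith)
  calc (1 - s) ^ a = (1 - s) ^ 2 * (1 - s) ^ (a - 2) := by
        rw [← rpow_natCast, ← rpow_add' h1s (by push_cast; linarith)]; norm_num
    _ ≤ (1 - s) ^ 2 * (1 + (a - 2) * -s) := by gcongr
    _ ≤ 1 - a * s + a * s ^ 2 := by
        nlinarith [mul_nonneg (by linarith : (0:ℝ) ≤ a - 2) (pow_nonneg hs0 3),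
          mul_nonneg (by linarith : (0:ℝ) ≤ 3 - a) (sq_nonneg s)]

theorem stmt_6 (a x t : ℝ) (ha2 : 2 ≤ a) (ha3 : a ≤ 3) (ht : 0 < t) (hxt : t ≤ x) :
    (x - t / a) ^ a ≤ x ^ a - t * x ^ (a - 1) + t ^ 2 / a * x ^ (a - 2) := by
  have hx : 0 < x := ht.trans_le hxt
  have ha : 0 < a := by linarith
  set s := t / (a * x) with hs
  have hs1 : s ≤ 1 := (div_le_one (by positivity)).2 (by nlinarith)
  have hbase : x - t / a = x * (1 - s) := by rw [hs]; field_simp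
  have hrhs : x ^ a - t * x ^ (a - 1) + t ^ 2 / a * x ^ (a - 2)
      = x ^ a * (1 - a * s + a * s ^ 2) := by
    rw [rpow_sub hx, rpow_sub hx, rpow_one, rpow_two, hs]
    field_simp
  rw [hbase, mul_rpow hx.le (by linarith), hrhs]
  exact mul_le_mul_of_nonneg_left
    (one_sub_rpow_le_of_two_le_of_le_three ha2 ha3 (by positivity) hs1) (by positivity)
end

section
/- For all real a with 2 ≤ a ≤ 3 and all real x ≥ t > 0, one has (x + t/(2a))^a ≤ x^a + t·x^(a-1) + (t²/(2a))·x^(a-2). -/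
/-!
Substituting `u = t / (2 a x) ∈ (0, 1]` and dividing by `x ^ a`, the inequality becomes
`(1 + u) ^ a ≤ 1 + 2 a u + 2 a u ^ 2`. Since `a ≤ 3` the left side is at most `(1 + u) ^ 3`,
and since `a ≥ 2` the right side is at least `1 + 4 u + 4 u ^ 2`, which exceeds `(1 + u) ^ 3` by
`u + u ^ 2 - u ^ 3 ≥ 0`.
-/

open Real

lemma one_add_pow_three_le {a u : ℝ} (ha : 2 ≤ a) (hu0 : 0 ≤ u) (hu1 : u ≤ 1) :
    (1 + u) ^ 3 ≤ 1 + 2 * a * u + 2 * a * u ^ 2 := by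
  nlinarith [mul_nonneg hu0 (sub_nonneg.2 hu1), mul_nonneg (sub_nonneg.2 ha) hu0]

lemma one_add_rpow_le {a u : ℝ} (ha2 : 2 ≤ a) (ha3 : a ≤ 3) (hu0 : 0 ≤ u) (hu1 : u ≤ 1) :
    (1 + u) ^ a ≤ 1 + 2 * a * u + 2 * a * u ^ 2 :=
  calc (1 + u) ^ a ≤ (1 + u) ^ (3 : ℝ) := rpow_le_rpow_of_exponent_le (by linarith) ha3
    _ = (1 + u) ^ 3 := by norm_cast
    _ ≤ _ := one_add_pow_three_le ha2 hu0 hu1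

lemma add_rpow_eq_rpow_mul_one_add_div_rpow {x s : ℝ} (a : ℝ) (hx : 0 < x) (hs : 0 ≤ s) :
    (x + s) ^ a = x ^ a * (1 + s / x) ^ a := by
  rw [← mul_rpow hx.le (by positivity), mul_add, mul_one, mul_div_cancel₀ _ hx.ne']

theorem stmt_7 (a x t : ℝ) (ha2 : 2 ≤ a) (ha3 : a ≤ 3) (ht : 0 < t) (hxt : t ≤ x) :
    (x + t / (2 * a)) ^ a ≤ x ^ a + t * x ^ (a - 1) + t ^ 2 / (2 * a) * x ^ (a - 2) := by
  have hx : 0 < x := ht.trans_le hxt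
  have ha : 0 < a := by linarith
  set u := t / (2 * a) / x with hu
  have hu1 : u ≤ 1 := by
    rw [hu, div_le_one hx, div_le_iff₀ (by positivity)]
    nlinarith
  calc (x + t / (2 * a)) ^ a = x ^ a * (1 + u) ^ a :=
        add_rpow_eq_rpow_mul_one_add_div_rpow a hx (by positivity)
    _ ≤ x ^ a * (1 + 2 * a * u + 2 * a * u ^ 2) :=
        mul_le_mul_of_nonneg_left (one_add_rpow_le ha2 ha3 (by positivity) hu1) (by positivity)
    _ = x ^ a + t * x ^ (a - 1) + t ^ 2 / (2 * a) * x ^ (a - 2) := by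
        rw [rpow_sub hx, rpow_sub hx, rpow_one, rpow_two, hu]
        field_simp
end

section
/- For all real a with 2 ≤ a ≤ 3 and all real x ≥ t > 0, one has (x - t/(2a))^a ≥ x^a - t·x^(a-1) + (t²/(2a))·x^(a-2). -/
/-! Put `s = t / (2a)`. Bernoulli's inequality gives `(x - s)^a ≥ x^a - a s x^(a-1) = x^a - (t/2) x^(a-1)`,
and the remaining gap `(t/2) x^(a-1) - (t²/(2a)) x^(a-2) = (t/(2a)) x^(a-2) (a x - t)` is nonnegative
because `t ≤ x ≤ a x`. -/

theorem Real.rpow_sub_mul_rpow_sub_one_le_rpow_sub {a x s : ℝ} (ha : 1 ≤ a) (hx : 0 < x)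
    (hsx : s ≤ x) : x ^ a - a * s * x ^ (a - 1) ≤ (x - s) ^ a := by
  have hsx' : s / x ≤ 1 := (div_le_one hx).2 hsx
  have bernoulli : 1 + a * -(s / x) ≤ (1 + -(s / x)) ^ a :=
    one_add_mul_self_le_rpow_one_add (by linarith) ha
  have hfactor : (x - s) ^ a = x ^ a * (1 + -(s / x)) ^ a := by
    rw [← Real.mul_rpow hx.le (by linarith)]
    congr 1
    field_simp
    ring
  have hlinear : x ^ a * (1 + a * -(s / x)) = x ^ a - a * s * x ^ (a - 1) := by
    rw [Real.rpow_sub_one hx.ne']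
    field_simp
    ring
  rw [hfactor, ← hlinear]
  exact mul_le_mul_of_nonneg_left bernoulli (Real.rpow_nonneg hx.le a)

theorem Real.sq_div_mul_rpow_sub_two_le {a x t : ℝ} (ha : 0 < a) (hx : 0 < x) (ht : 0 ≤ t)
    (htx : t ≤ a * x) : t ^ 2 / (2 * a) * x ^ (a - 2) ≤ t / 2 * x ^ (a - 1) := by
  have hpow : x ^ (a - 1) = x ^ (a - 2) * x := by
    rw [← Real.rpow_add_one hx.ne']
    ring_nf
  have hcoeff : t ^ 2 / (2 * a) ≤ t / 2 * x := by
    rw [div_le_iff₀ (by positivity)]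
    nlinarith [mul_le_mul_of_nonneg_left htx ht]
  rw [hpow, mul_comm (x ^ (a - 2)) x, ← mul_assoc]
  exact mul_le_mul_of_nonneg_right hcoeff (Real.rpow_nonneg hx.le _)

theorem stmt_8_general (a x t : ℝ) (ha2 : 2 ≤ a) (ht : 0 < t) (hxt : t ≤ x) :
    x ^ a - t * x ^ (a - 1) + t ^ 2 / (2 * a) * x ^ (a - 2) ≤ (x - t / (2 * a)) ^ a := by
  have hx : 0 < x := ht.trans_le hxt
  have hsx : t / (2 * a) ≤ x := by
    rw [div_le_iff₀ (by linarith)]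
    nlinarith
  have htangent := Real.rpow_sub_mul_rpow_sub_one_le_rpow_sub (a := a) (by linarith) hx hsx
  have hslope : a * (t / (2 * a)) = t / 2 := by
    field_simp
  have hgap := Real.sq_div_mul_rpow_sub_two_le (a := a) (by linarith) hx ht.le (by nlinarith)
  rw [hslope] at htangent
  linarith

theorem stmt_8 (a x t : ℝ) (ha2 : 2 ≤ a) (ha3 : a ≤ 3) (ht : 0 < t) (hxt : t ≤ x) :
    x ^ a - t * x ^ (a - 1) + t ^ 2 / (2 * a) * x ^ (a - 2) ≤ (x - t / (2 * a)) ^ a :=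
  stmt_8_general a x t ha2 ht hxt
end

section
/- Let 1/3 ≤ γ ≤ 1/2, 0 < t ≤ 1, and suppose x ≥ t^(γ/(1-γ)) with x > 0. Then (x^γ + 2γ·t·x^(-(1-2γ)))^(1/γ) ≥ x + (x^γ + 2γ·t·x^(1-2γ))·t. -/
theorem stmt_9 (γ t x : ℝ) (hγ1 : 1 / 3 ≤ γ) (hγ2 : γ ≤ 1 / 2) (ht0 : 0 < t) (ht1 : t ≤ 1)
    (hx0 : 0 < x) (hx : t ^ (γ / (1 - γ)) ≤ x) :
    x + (x ^ γ + 2 * γ * t * x ^ (1 - 2 * γ)) * t ≤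
      (x ^ γ + 2 * γ * t * x ^ (-(1 - 2 * γ))) ^ (1 / γ) := by
  have hγ0 : 0 < γ := by linarith
  have h1γ : 0 < 1 - γ := by linarith
  -- Key: 2γt ≤ x^(3γ-1)
  have hkey : 2 * γ * t ≤ x ^ (3 * γ - 1) := by
    have he : γ / (1 - γ) * (3 * γ - 1) ≤ 1 := by
      rw [div_mul_eq_mul_div, div_le_one h1γ]; nlinarith
    have h2 : t ^ ((1:ℝ)) ≤ t ^ (γ / (1 - γ) * (3 * γ - 1)) :=
      Real.rpow_le_rpow_of_exponent_ge ht0 ht1 he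
    have h3 : (t ^ (γ / (1 - γ))) ^ (3 * γ - 1) ≤ x ^ (3 * γ - 1) :=
      Real.rpow_le_rpow (Real.rpow_pos_of_pos ht0 _).le hx (by linarith)
    rw [← Real.rpow_mul ht0.le] at h3
    rw [Real.rpow_one] at h2
    nlinarith
  -- rewrite RHS
  have hs0 : 0 ≤ 2 * γ * t * x ^ (γ - 1) := by positivity
  have hrw : x ^ γ + 2 * γ * t * x ^ (-(1 - 2 * γ))
      = x ^ γ * (1 + 2 * γ * t * x ^ (γ - 1)) := by
    rw [show -(1 - 2 * γ) = γ + (γ - 1) by ring, Real.rpow_add hx0]; ring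
  have hsplit : (x ^ γ * (1 + 2 * γ * t * x ^ (γ - 1))) ^ (1 / γ)
      = x * (1 + 2 * γ * t * x ^ (γ - 1)) ^ (1 / γ) := by
    rw [Real.mul_rpow (Real.rpow_pos_of_pos hx0 _).le (by positivity),
      ← Real.rpow_mul hx0.le, mul_one_div, div_self hγ0.ne', Real.rpow_one]
  have hbern : 1 + (1 / γ) * (2 * γ * t * x ^ (γ - 1))
      ≤ (1 + 2 * γ * t * x ^ (γ - 1)) ^ (1 / γ) :=
    one_add_mul_self_le_rpow_one_add (by linarith) (by rw [le_div_iff₀ hγ0]; linarith)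
  have hmul : x * (1 + (1 / γ) * (2 * γ * t * x ^ (γ - 1)))
      ≤ x * (1 + 2 * γ * t * x ^ (γ - 1)) ^ (1 / γ) := by
    exact mul_le_mul_of_nonneg_left hbern hx0.le
  have hx1 : x * (x ^ (γ - 1)) = x ^ γ := by
    nth_rewrite 1 [← Real.rpow_one x]
    rw [← Real.rpow_add hx0]; ring_nf
  have hdiv : (1 / γ) * (2 * γ) = 2 := by field_simp
  -- lower bound: x + 2 t x^γ
  have hlow : x + 2 * t * x ^ γ ≤ x * (1 + (1 / γ) * (2 * γ * t * x ^ (γ - 1))) := by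
    have : x * ((1 / γ) * (2 * γ * t * x ^ (γ - 1))) = 2 * t * x ^ γ := by
      rw [show x * ((1 / γ) * (2 * γ * t * x ^ (γ - 1))) =
        (1 / γ) * (2 * γ) * t * (x * x ^ (γ - 1)) by ring, hx1, hdiv]
    nlinarith [this]
  -- LHS ≤ x + 2 t x^γ
  have hx2 : x ^ (1 - 2 * γ) * x ^ (3 * γ - 1) = x ^ γ := by
    rw [← Real.rpow_add hx0]; ring_nf
  have hLHS : x + (x ^ γ + 2 * γ * t * x ^ (1 - 2 * γ)) * t ≤ x + 2 * t * x ^ γ := by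
    have hp : 0 < x ^ (1 - 2 * γ) := Real.rpow_pos_of_pos hx0 _
    nlinarith [mul_le_mul_of_nonneg_left hkey (mul_nonneg ht0.le hp.le)]
  rw [hrw, hsplit]
  linarith
end

section
/- For real numbers x, y ≥ 0 and 0 < α ≤ 1, if n is a natural number with 2^(-(n+1))·x ≤ y ≤ 2^(-n)·x, then (x + y)^α ≥ x^α + (α/2)·2^(-(1-α)(n+1))·y^α. -/
/-!
Normalising by `x`, with `t = y / x ∈ [2^(-(n+1)), 1]`, the claim becomes
`1 + (α/2) c^(1-α) t^α ≤ (1 + t)^α` for `c = 2^(-(n+1))`. Since `c ≤ t`, we have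
`c^(1-α) t^α ≤ t^(1-α) t^α = t`, and `1 + (α/2) t ≤ (1 + t)^α` on `[0, 1]` follows from
Bernoulli's inequality `(1 + t)^(1-α) ≤ 1 + (1-α) t`.
-/

open Real

lemma one_add_half_mul_le_one_add_rpow {α t : ℝ} (hα0 : 0 ≤ α) (hα1 : α ≤ 1)
    (ht0 : 0 ≤ t) (ht1 : t ≤ 1) : 1 + α / 2 * t ≤ (1 + t) ^ α := by
  have hpos : 0 < 1 + t := by linarith
  have hbern : (1 + t) ^ (1 - α) ≤ 1 + (1 - α) * t :=
    rpow_one_add_le_one_add_mul_self (by linarith) (by linarith) (by linarith)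
  have hsplit : (1 + t) ^ α * (1 + t) ^ (1 - α) = 1 + t := by
    rw [← rpow_add hpos, add_sub_cancel, rpow_one]
  have hle : 1 + t ≤ (1 + t) ^ α * (1 + (1 - α) * t) :=
    hsplit.symm.le.trans (mul_le_mul_of_nonneg_left hbern (rpow_nonneg hpos.le α))
  -- `(1 + α t / 2)(1 + (1 - α) t) ≤ 1 + t` reduces to `(1 - α) t ≤ 1`.
  have hprod : (1 + α / 2 * t) * (1 + (1 - α) * t) ≤ 1 + t := by
    nlinarith [mul_nonneg (mul_nonneg hα0 ht0) (sub_nonneg.mpr ht1),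
      mul_nonneg (mul_nonneg hα0 ht0) (mul_nonneg hα0 ht0)]
  exact le_of_mul_le_mul_right (hprod.trans hle) (by nlinarith)

lemma rpow_one_sub_mul_rpow_le {α c t : ℝ} (hα1 : α ≤ 1) (hc : 0 ≤ c) (hct : c ≤ t) :
    c ^ (1 - α) * t ^ α ≤ t := by
  have ht : 0 ≤ t := hc.trans hct
  calc c ^ (1 - α) * t ^ α ≤ t ^ (1 - α) * t ^ α := by gcongr
    _ = t := by
        rcases ht.eq_or_lt with rfl | ht
        · rcases eq_or_ne α 0 with rfl | hα
          · simp
          · simp [zero_rpow hα]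
        · rw [← rpow_add ht, sub_add_cancel, rpow_one]

lemma rpow_add_half_mul_rpow_le_add_rpow {α c x y : ℝ} (hα0 : 0 < α) (hα1 : α ≤ 1)
    (hc : 0 ≤ c) (hx : 0 ≤ x) (hcy : c * x ≤ y) (hyx : y ≤ x) :
    x ^ α + α / 2 * c ^ (1 - α) * y ^ α ≤ (x + y) ^ α := by
  rcases hx.eq_or_lt with rfl | hx
  · obtain rfl : y = 0 := le_antisymm hyx (by simpa using hcy)
    simp [zero_rpow hα0.ne']
  set t := y / x
  have hy : y = t * x := (div_mul_cancel₀ y hx.ne').symm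
  have hct : c ≤ t := (le_div_iff₀ hx).mpr hcy
  have ht1 : t ≤ 1 := (div_le_one hx).mpr hyx
  have ht0 : 0 ≤ t := hc.trans hct
  have key : 1 + α / 2 * (c ^ (1 - α) * t ^ α) ≤ (1 + t) ^ α :=
    le_trans (by gcongr; exact rpow_one_sub_mul_rpow_le hα1 hc hct)
      (one_add_half_mul_le_one_add_rpow hα0.le hα1 ht0 ht1)
  have hxy : x + y = (1 + t) * x := by rw [hy]; ring
  rw [hxy, hy, mul_rpow ht0 hx.le, mul_rpow (by linarith) hx.le]
  nlinarith [mul_le_mul_of_nonneg_right key (rpow_nonneg hx.le α)]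

theorem stmt_12_general (x y α : ℝ) (n : ℕ) (hx : 0 ≤ x)
    (hα0 : 0 < α) (hα1 : α ≤ 1)
    (h1 : (2 : ℝ) ^ (-((n : ℝ) + 1)) * x ≤ y) (h2 : y ≤ (2 : ℝ) ^ (-(n : ℝ)) * x) :
    x ^ α + α / 2 * (2 : ℝ) ^ (-(1 - α) * ((n : ℝ) + 1)) * y ^ α ≤ (x + y) ^ α := by
  have hpow : (2 : ℝ) ^ (-(1 - α) * ((n : ℝ) + 1)) = ((2 : ℝ) ^ (-((n : ℝ) + 1))) ^ (1 - α) := by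
    rw [← rpow_mul zero_le_two]
    ring_nf
  have hyx : y ≤ x := h2.trans <| mul_le_of_le_one_left hx <|
    rpow_le_one_of_one_le_of_nonpos one_le_two (neg_nonpos.mpr n.cast_nonneg)
  rw [hpow]
  exact rpow_add_half_mul_rpow_le_add_rpow hα0 hα1 (rpow_nonneg zero_le_two _) hx h1 hyx

theorem stmt_12 (x y α : ℝ) (n : ℕ) (hx : 0 ≤ x) (hy : 0 ≤ y)
    (hα0 : 0 < α) (hα1 : α ≤ 1)
    (h1 : (2 : ℝ) ^ (-((n : ℝ) + 1)) * x ≤ y) (h2 : y ≤ (2 : ℝ) ^ (-(n : ℝ)) * x) :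
    x ^ α + α / 2 * (2 : ℝ) ^ (-(1 - α) * ((n : ℝ) + 1)) * y ^ α ≤ (x + y) ^ α :=
  stmt_12_general x y α n hx hα0 hα1 h1 h2
end

section
/- For every α, β > 0 and every natural number n, the function x ↦ (∫_x^∞ e^(-α r^β) r^n dr) / ((1/(αβ)) · e^(-α x^β) · x^(n+1-β)) tends to 1 as x → ∞. -/
/-! Both the tail integral and the proposed asymptotic vanish at infinity, so L'Hôpital applies.
The tail integral has derivative `-exp (-α x^β) x^s`, while the comparison function has derivative
`exp (-α x^β) x^s (d x^(-β) - 1)` with `d = (s + 1 - β) / (α β)`; their quotient `(1 - d x^(-β))⁻¹`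
tends to `1`. -/

open MeasureTheory Filter Set Real Asymptotics Topology

section TailIntegral

variable {E : Type*} [NormedAddCommGroup E] [NormedSpace ℝ E] {f : ℝ → E} {a : ℝ}

lemma tendsto_integral_Ioi_atTop_zero (hf : IntegrableOn f (Ioi a)) :
    Tendsto (fun x => ∫ r in Ioi x, f r) atTop (𝓝 0) := by
  have h := tendsto_setIntegral_of_antitone (μ := volume) (fun x : ℝ => measurableSet_Ioi)
    (fun _ _ hxy => Ioi_subset_Ioi hxy) ⟨a, hf⟩
  have hempty : ⋂ x : ℝ, Ioi x = ∅ := iInter_eq_empty_iff.mpr fun r => ⟨r, lt_irrefl r⟩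
  rwa [hempty, setIntegral_empty] at h

lemma hasDerivAt_integral_Ioi [CompleteSpace E] (hf : IntegrableOn f (Ioi a)) {x : ℝ}
    (hax : a < x) (hmeas : StronglyMeasurableAtFilter f (𝓝 x)) (hcont : ContinuousAt f x) :
    HasDerivAt (fun y => ∫ r in Ioi y, f r) (-f x) x := by
  have hint : IntervalIntegrable f volume a x :=
    (intervalIntegrable_iff_integrableOn_Ioc_of_le hax.le).mpr (hf.mono_set Ioc_subset_Ioi_self)
  refine ((intervalIntegral.integral_hasDerivAt_right hint hmeas hcont).const_sub
    (∫ r in Ioi a, f r)).congr_of_eventuallyEq ?_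
  filter_upwards [Ioi_mem_nhds hax] with y hy
  rw [← intervalIntegral.integral_Ioi_sub_Ioi hf (le_of_lt hy), sub_sub_cancel]

end TailIntegral

section StretchedExponential

variable {α β : ℝ}

lemma isLittleO_exp_neg_mul_rpow_mul_rpow_atTop (hα : 0 < α) (hβ : 0 < β) (s t : ℝ) :
    (fun x : ℝ => exp (-α * x ^ β) * x ^ s) =o[atTop] fun x => x ^ t := by
  have hexp : (fun x : ℝ => exp (-α * x ^ β)) =o[atTop] fun x => x ^ (t - s) := by
    refine ((isLittleO_exp_neg_mul_rpow_atTop hα ((t - s) / β)).comp_tendsto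
      (tendsto_rpow_atTop hβ)).congr' EventuallyEq.rfl ?_
    filter_upwards [eventually_gt_atTop 0] with x hx
    rw [Function.comp_apply, ← rpow_mul hx.le, mul_div_cancel₀ _ hβ.ne']
  refine (hexp.mul_isBigO (isBigO_refl (fun x : ℝ => x ^ s) atTop)).congr' EventuallyEq.rfl ?_
  filter_upwards [eventually_gt_atTop 0] with x hx
  rw [← rpow_add hx, sub_add_cancel]

lemma tendsto_exp_neg_mul_rpow_mul_rpow_atTop_zero (hα : 0 < α) (hβ : 0 < β) (s : ℝ) :
    Tendsto (fun x : ℝ => exp (-α * x ^ β) * x ^ s) atTop (𝓝 0) := by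
  have h := isLittleO_exp_neg_mul_rpow_mul_rpow_atTop hα hβ s 0
  simp only [rpow_zero] at h
  exact (isLittleO_one_iff ℝ).mp h

lemma continuousOn_exp_neg_mul_rpow_mul_rpow (α β s : ℝ) :
    ContinuousOn (fun x : ℝ => exp (-α * x ^ β) * x ^ s) (Ioi 0) := by
  intro x hx
  have hx0 : x ≠ 0 := (mem_Ioi.mp hx).ne'
  fun_prop (disch := exact Or.inl hx0)

lemma integrableOn_Ioi_exp_neg_mul_rpow_mul_rpow (hα : 0 < α) (hβ : 0 < β) (s : ℝ) {a : ℝ}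
    (ha : 0 < a) : IntegrableOn (fun x : ℝ => exp (-α * x ^ β) * x ^ s) (Ioi a) := by
  have hloc := ((continuousOn_exp_neg_mul_rpow_mul_rpow α β s).mono
    fun _ hx => ha.trans_le hx).locallyIntegrableOn (μ := volume) measurableSet_Ici
  exact (hloc.integrableOn_of_isBigO_atTop
    (isLittleO_exp_neg_mul_rpow_mul_rpow_atTop hα hβ s (-2)).isBigO
    (integrableAtFilter_rpow_atTop_iff.mpr (by norm_num))).mono_set Ioi_subset_Ici_self

lemma hasDerivAt_div_mul_exp_neg_mul_rpow_mul_rpow (hα : 0 < α) (hβ : 0 < β) (s : ℝ) {x : ℝ} (hx : 0 < x) :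
    HasDerivAt (fun x : ℝ => 1 / (α * β) * exp (-α * x ^ β) * x ^ (s + 1 - β))
      (exp (-α * x ^ β) * x ^ s * ((s + 1 - β) / (α * β) * x ^ (-β) - 1)) x := by
  have hexp := ((hasDerivAt_rpow_const (p := β) (Or.inl hx.ne')).const_mul (-α)).exp
  have hpow := hasDerivAt_rpow_const (p := s + 1 - β) (Or.inl hx.ne')
  refine ((hexp.const_mul (1 / (α * β))).mul hpow).congr_deriv ?_
  have e1 : x ^ (β - 1) * x ^ (s + 1 - β) = x ^ s := by
    rw [← rpow_add hx]; ring_nf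
  have e2 : x ^ (s + 1 - β - 1) = x ^ s * x ^ (-β) := by
    rw [← rpow_add hx]; ring_nf
  rw [e2]
  field_simp
  linear_combination (-(α * β)) * e1

theorem tendsto_integral_Ioi_exp_neg_mul_rpow_mul_rpow_div (hα : 0 < α) (hβ : 0 < β) (s : ℝ) :
    Tendsto (fun x : ℝ => (∫ r in Ioi x, exp (-α * r ^ β) * r ^ s) /
      (1 / (α * β) * exp (-α * x ^ β) * x ^ (s + 1 - β))) atTop (𝓝 1) := by
  set d := (s + 1 - β) / (α * β)
  have hf := integrableOn_Ioi_exp_neg_mul_rpow_mul_rpow hα hβ s one_pos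
  have hcont := continuousOn_exp_neg_mul_rpow_mul_rpow α β s
  have hsmall : Tendsto (fun x : ℝ => d * x ^ (-β)) atTop (𝓝 0) := by
    simpa using (tendsto_rpow_neg_atTop hβ).const_mul d
  have hlarge : ∀ᶠ x : ℝ in atTop, 0 < x ∧ d * x ^ (-β) < 1 :=
    (eventually_gt_atTop 0).and (hsmall.eventually (gt_mem_nhds one_pos))
  refine HasDerivAt.lhopital_zero_atTop (f' := fun x => -(exp (-α * x ^ β) * x ^ s)) ?_
    (hlarge.mono fun x hx => hasDerivAt_div_mul_exp_neg_mul_rpow_mul_rpow hα hβ s hx.1) ?_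
    (tendsto_integral_Ioi_atTop_zero hf) ?_ ?_
  · filter_upwards [eventually_gt_atTop 1] with x hx
    have hx0 : x ∈ Ioi (0 : ℝ) := one_pos.trans hx
    exact hasDerivAt_integral_Ioi hf hx (hcont.stronglyMeasurableAtFilter isOpen_Ioi x hx0)
      (hcont.continuousAt (Ioi_mem_nhds hx0))
  · filter_upwards [hlarge] with x ⟨hx, hdx⟩
    have : 0 < exp (-α * x ^ β) * x ^ s := by positivity
    exact mul_ne_zero this.ne' (by linarith)
  · simpa [mul_assoc] using
      (tendsto_exp_neg_mul_rpow_mul_rpow_atTop_zero hα hβ (s + 1 - β)).const_mul (1 / (α * β))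
  · have h : Tendsto (fun x : ℝ => (1 - d * x ^ (-β))⁻¹) atTop (𝓝 1) := by
      simpa using (tendsto_const_nhds.sub hsmall).inv₀ (by norm_num : (1 : ℝ) - 0 ≠ 0)
    refine h.congr' ?_
    filter_upwards [hlarge] with x ⟨hx, hdx⟩
    have : 0 < exp (-α * x ^ β) * x ^ s := by positivity
    rw [neg_div, div_mul_cancel_left₀ this.ne', ← inv_neg, neg_sub]

end StretchedExponential

theorem stmt_13 (α β : ℝ) (hα : 0 < α) (hβ : 0 < β) (n : ℕ) :
    Tendsto (fun x : ℝ =>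
        (∫ r in Set.Ioi x, Real.exp (-α * r ^ β) * r ^ (n : ℝ)) /
          (1 / (α * β) * Real.exp (-α * x ^ β) * x ^ ((n : ℝ) + 1 - β)))
      atTop (nhds 1) :=
  tendsto_integral_Ioi_exp_neg_mul_rpow_mul_rpow_div hα hβ n
end

section
/- Let N ≥ 1 and α > 0. For each n ≥ 2, let f_n : ℝ^N → ℝ be defined by f_n(v) = e^(-α|v|²) · 1_{n ≤ |v| ≤ n²}, and define the temperature T_n by N·T_n = (∫ |v|² f_n(v) dv) / (∫ f_n(v) dv). Then T_n / (n²/N) tends to 1 as n → ∞. -/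
/-!
On the shell `n ≤ ‖v‖ ≤ n²` the weight `exp (-α‖v‖²)` concentrates at the inner radius. The
mass of the thin annulus `n ≤ ‖v‖ ≤ n + 1` alone is at least `exp (-α(n+1)²)` times its volume,
while the part of `∫ ‖v‖² f` coming from `‖v‖ ≥ n + 2` is at most `n⁴ exp (-α(n+2)²)` times the
volume of the shell. The volume ratio is polynomial in `n` and the exponentials differ by
`exp (-α(2n+3))`, so the mean of `‖v‖²` lies between `n²` and `(n+2)² + o(1)`.
-/

open MeasureTheory Filter Metric Real Module Topology

section Shell

variable {E : Type*} [NormedAddCommGroup E]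

def shell (a b : ℝ) : Set E := {v | a ≤ ‖v‖ ∧ ‖v‖ ≤ b}

lemma shell_eq_closedBall_diff_ball (a b : ℝ) :
    (shell a b : Set E) = closedBall 0 b \ ball 0 a := by
  ext v
  simp [shell, and_comm]

lemma shell_subset_shell {a b b' : ℝ} (h : b ≤ b') : (shell a b : Set E) ⊆ shell a b' :=
  fun _ hv => ⟨hv.1, hv.2.trans h⟩

lemma isClosed_shell (a b : ℝ) : IsClosed (shell a b : Set E) :=
  isClosed_Icc.preimage continuous_norm

lemma isCompact_shell [ProperSpace E] (a b : ℝ) : IsCompact (shell a b : Set E) :=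
  (isCompact_closedBall 0 b).of_isClosed_subset (isClosed_shell a b)
    fun _ hv => mem_closedBall_zero_iff.2 hv.2

end Shell

lemma sq_mul_exp_neg_le {α r b c : ℝ} (hα : 0 ≤ α) (hc : 0 ≤ c) (hr : 0 ≤ r) (hrb : r ≤ b) :
    r ^ 2 * exp (-α * r ^ 2) ≤ c ^ 2 * exp (-α * r ^ 2) + b ^ 2 * exp (-α * c ^ 2) := by
  rcases le_total r c with hrc | hcr
  · have : r ^ 2 * exp (-α * r ^ 2) ≤ c ^ 2 * exp (-α * r ^ 2) := by gcongr
    linarith [show 0 ≤ b ^ 2 * exp (-α * c ^ 2) by positivity]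
  · have : exp (-α * r ^ 2) ≤ exp (-α * c ^ 2) :=
      exp_le_exp.2 <| by nlinarith [mul_le_mul_of_nonneg_left (pow_le_pow_left₀ hc hcr 2) hα]
    have : r ^ 2 * exp (-α * r ^ 2) ≤ b ^ 2 * exp (-α * c ^ 2) :=
      mul_le_mul (pow_le_pow_left₀ hr hrb 2) this (by positivity) (by positivity)
    linarith [show 0 ≤ c ^ 2 * exp (-α * r ^ 2) by positivity]

section Estimates

variable {E : Type*} [NormedAddCommGroup E] [MeasurableSpace E] [BorelSpace E] [ProperSpace E]
  (μ : Measure E) [IsFiniteMeasureOnCompacts μ]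

lemma integrableOn_shell {f : E → ℝ} (hf : Continuous f) (a b : ℝ) :
    IntegrableOn f (shell a b) μ :=
  hf.continuousOn.integrableOn_compact (isCompact_shell a b)

lemma sq_mul_setIntegral_shell_le {f : E → ℝ} (hf : Continuous f) (hf₀ : 0 ≤ f) {a : ℝ}
    (ha : 0 ≤ a) (b : ℝ) :
    a ^ 2 * ∫ v in shell a b, f v ∂μ ≤ ∫ v in shell a b, ‖v‖ ^ 2 * f v ∂μ := by
  rw [← integral_const_mul]
  exact setIntegral_mono_on ((integrableOn_shell μ hf a b).const_mul _)
    (integrableOn_shell μ (by fun_prop) a b) (isClosed_shell a b).measurableSet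
    fun v hv => mul_le_mul_of_nonneg_right (pow_le_pow_left₀ ha hv.1 2) (hf₀ v)

/-- The paper's `N * T` for the truncated Maxwellian `exp (-α‖v‖²) 1_{a ≤ ‖v‖ ≤ b}`. -/
noncomputable def shellGaussianMeanSqNorm (μ : Measure E) (α a b : ℝ) : ℝ :=
  (∫ v in shell a b, ‖v‖ ^ 2 * exp (-α * ‖v‖ ^ 2) ∂μ) / ∫ v in shell a b, exp (-α * ‖v‖ ^ 2) ∂μ

variable {α : ℝ} (hα : 0 ≤ α)
include hα

lemma setIntegral_shell_sq_norm_mul_exp_le {c : ℝ} (hc : 0 ≤ c) (a b : ℝ) :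
    ∫ v in shell a b, ‖v‖ ^ 2 * exp (-α * ‖v‖ ^ 2) ∂μ ≤
      c ^ 2 * (∫ v in shell a b, exp (-α * ‖v‖ ^ 2) ∂μ) +
        b ^ 2 * exp (-α * c ^ 2) * μ.real (shell a b) := by
  have hint : IntegrableOn (fun v : E => exp (-α * ‖v‖ ^ 2)) (shell a b) μ :=
    integrableOn_shell μ (by fun_prop) a b
  calc _ ≤ ∫ v in shell a b, (c ^ 2 * exp (-α * ‖v‖ ^ 2) + b ^ 2 * exp (-α * c ^ 2)) ∂μ :=
        setIntegral_mono_on (integrableOn_shell μ (by fun_prop) a b)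
          (integrableOn_shell μ (by fun_prop) a b) (isClosed_shell a b).measurableSet
          fun v hv => sq_mul_exp_neg_le hα hc (norm_nonneg v) hv.2
    _ = _ := by
        rw [integral_add (hint.const_mul _) (integrableOn_shell μ continuous_const a b),
          integral_const_mul, setIntegral_const, smul_eq_mul]
        ring

lemma exp_mul_measureReal_shell_le_setIntegral {a b d : ℝ} (hdb : d ≤ b) :
    exp (-α * d ^ 2) * μ.real (shell a d) ≤ ∫ v in shell a b, exp (-α * ‖v‖ ^ 2) ∂μ :=
  calc _ ≤ ∫ v in shell a d, exp (-α * ‖v‖ ^ 2) ∂μ :=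
        setIntegral_ge_of_const_le_real (isClosed_shell a d).measurableSet
          (isCompact_shell a d).measure_lt_top.ne (fun v hv => exp_le_exp.2 <| by
            nlinarith [mul_le_mul_of_nonneg_left
              (pow_le_pow_left₀ (norm_nonneg v) hv.2 2) hα])
          (integrableOn_shell μ (by fun_prop) a d)
    _ ≤ _ := setIntegral_mono_set (integrableOn_shell μ (by fun_prop) a b)
        (ae_of_all _ fun v => (exp_pos _).le) (shell_subset_shell hdb).eventuallyLE


variable {a b d : ℝ} (hdb : d ≤ b) (hd : 0 < μ.real (shell a d))
include hdb hd

lemma sq_le_shellGaussianMeanSqNorm (ha : 0 ≤ a) :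
    a ^ 2 ≤ shellGaussianMeanSqNorm μ α a b := by
  have hA := (mul_pos (exp_pos _) hd).trans_le (exp_mul_measureReal_shell_le_setIntegral μ hα hdb)
  rw [shellGaussianMeanSqNorm, le_div_iff₀ hA]
  exact sq_mul_setIntegral_shell_le μ (by fun_prop) (fun _ => (exp_pos _).le) ha b

lemma shellGaussianMeanSqNorm_le {c : ℝ} (hc : 0 ≤ c) :
    shellGaussianMeanSqNorm μ α a b ≤
      c ^ 2 + b ^ 2 * exp (-α * (c ^ 2 - d ^ 2)) * (μ.real (shell a b) / μ.real (shell a d)) := by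
  set A := ∫ v in shell a b, exp (-α * ‖v‖ ^ 2) ∂μ
  have hlow := exp_mul_measureReal_shell_le_setIntegral μ hα (a := a) hdb
  have hA : 0 < A := (mul_pos (exp_pos _) hd).trans_le hlow
  have hexp : exp (-α * (c ^ 2 - d ^ 2)) = exp (-α * c ^ 2) / exp (-α * d ^ 2) := by
    rw [← exp_sub]; ring_nf
  calc shellGaussianMeanSqNorm μ α a b
      ≤ (c ^ 2 * A + b ^ 2 * exp (-α * c ^ 2) * μ.real (shell a b)) / A :=
        div_le_div_of_nonneg_right (setIntegral_shell_sq_norm_mul_exp_le μ hα hc a b) hA.le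
    _ = c ^ 2 + b ^ 2 * exp (-α * c ^ 2) * μ.real (shell a b) / A := by
        field_simp
    _ ≤ c ^ 2 + b ^ 2 * exp (-α * c ^ 2) * μ.real (shell a b) /
          (exp (-α * d ^ 2) * μ.real (shell a d)) := by
        gcongr
    _ = _ := by rw [hexp]; field_simp

end Estimates

section AddHaar

variable {E : Type*} [NormedAddCommGroup E] [NormedSpace ℝ E] [FiniteDimensional ℝ E]
  [MeasurableSpace E] [BorelSpace E] (μ : Measure E) [μ.IsAddHaarMeasure]

lemma addHaar_real_shell {a b : ℝ} (ha : 0 < a) (hab : a ≤ b) :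
    μ.real (shell a b) = (b ^ finrank ℝ E - a ^ finrank ℝ E) * μ.real (ball 0 1) := by
  rw [shell_eq_closedBall_diff_ball, measureReal_sdiff (ball_subset_closedBall.trans
    (closedBall_subset_closedBall hab)) measurableSet_ball measure_closedBall_lt_top.ne,
    Measure.addHaar_real_closedBall μ 0 (ha.le.trans hab)]
  simp only [measureReal_def, Measure.addHaar_ball_of_pos μ 0 ha, ENNReal.toReal_mul,
    ENNReal.toReal_ofReal (pow_nonneg ha.le _)]
  ring

variable [Nontrivial E]

lemma measureReal_shell_pos {a b : ℝ} (ha : 0 < a) (hab : a < b) : 0 < μ.real (shell a b) := by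
  rw [addHaar_real_shell μ ha hab.le]
  exact mul_pos (sub_pos.2 (pow_lt_pow_left₀ hab ha.le finrank_pos.ne'))
    (ENNReal.toReal_pos (measure_ball_pos μ 0 one_pos).ne' measure_ball_lt_top.ne)

lemma measureReal_shell_div_le {x : ℝ} (hx : 2 ≤ x) :
    μ.real (shell x (x ^ 2)) / μ.real (shell x (x + 1)) ≤ x ^ (2 * finrank ℝ E) := by
  have hgap : 1 ≤ (x + 1) ^ finrank ℝ E - x ^ finrank ℝ E := by
    have := pow_add_pow_le (by linarith : 0 ≤ x) zero_le_one (finrank_pos (R := ℝ) (M := E)).ne'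
    rw [one_pow] at this
    linarith
  rw [div_le_iff₀ (measureReal_shell_pos μ (by linarith) (lt_add_one x)),
    addHaar_real_shell μ (by linarith) (by nlinarith),
    addHaar_real_shell μ (by linarith) (by linarith), pow_mul]
  have hω : 0 ≤ μ.real (ball (0 : E) 1) := measureReal_nonneg
  have hx' : 0 ≤ x ^ finrank ℝ E := pow_nonneg (by linarith) _
  have := le_mul_of_one_le_right (pow_nonneg (sq_nonneg x) (finrank ℝ E)) hgap
  nlinarith

variable {α : ℝ}

lemma shellGaussianMeanSqNorm_div_sq_le (hα : 0 ≤ α) {x : ℝ} (hx : 2 ≤ x) :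
    shellGaussianMeanSqNorm μ α x (x ^ 2) / x ^ 2 ≤
      (1 + 2 / x) ^ 2 + x ^ (2 * finrank ℝ E + 2) * exp (-(2 * α) * x) := by
  have hexp : exp (-α * ((x + 2) ^ 2 - (x + 1) ^ 2)) ≤ exp (-(2 * α) * x) :=
    exp_le_exp.2 (by nlinarith)
  have hM := shellGaussianMeanSqNorm_le μ hα (by nlinarith : x + 1 ≤ x ^ 2)
    (measureReal_shell_pos μ (by linarith) (lt_add_one x)) (by linarith : 0 ≤ x + 2)
  have hratio := measureReal_shell_div_le μ hx
  calc shellGaussianMeanSqNorm μ α x (x ^ 2) / x ^ 2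
      ≤ ((x + 2) ^ 2 + (x ^ 2) ^ 2 * exp (-(2 * α) * x) * x ^ (2 * finrank ℝ E)) / x ^ 2 := by
        gcongr
        refine hM.trans ?_
        gcongr
    _ = _ := by
        field_simp
        ring

theorem tendsto_shellGaussianMeanSqNorm_div_sq (hα : 0 < α) :
    Tendsto (fun x => shellGaussianMeanSqNorm μ α x (x ^ 2) / x ^ 2) atTop (𝓝 1) := by
  have hpoly : Tendsto (fun x : ℝ => (1 + 2 / x) ^ 2) atTop (𝓝 1) := by
    have : Tendsto (fun x : ℝ => 2 / x) atTop (𝓝 0) := tendsto_const_nhds.div_atTop tendsto_id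
    simpa using (this.const_add 1).pow 2
  have hdecay : Tendsto (fun x : ℝ => x ^ (2 * finrank ℝ E + 2) * exp (-(2 * α) * x))
      atTop (𝓝 0) := by
    refine (tendsto_rpow_mul_exp_neg_mul_atTop_nhds_zero (2 * finrank ℝ E + 2 : ℕ) (2 * α)
      (by positivity)).congr fun x => ?_
    rw [rpow_natCast]
  refine tendsto_of_tendsto_of_tendsto_of_le_of_le' tendsto_const_nhds
    (by simpa only [add_zero] using hpoly.add hdecay) ?_ ?_
  · filter_upwards [eventually_ge_atTop 2] with x hx
    rw [le_div_iff₀ (by positivity), one_mul]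
    exact sq_le_shellGaussianMeanSqNorm μ hα.le (by nlinarith : x + 1 ≤ x ^ 2)
      (measureReal_shell_pos μ (by linarith) (lt_add_one x)) (by linarith)
  · filter_upwards [eventually_ge_atTop 2] with x hx
    exact shellGaussianMeanSqNorm_div_sq_le μ hα.le hx

end AddHaar

theorem stmt_14 (N : ℕ) (hN : 1 ≤ N) (α : ℝ) (hα : 0 < α) :
    Tendsto (fun n : ℕ =>
        ((∫ v : EuclideanSpace ℝ (Fin N), ‖v‖ ^ 2 *
            Set.indicator {v : EuclideanSpace ℝ (Fin N) | (n : ℝ) ≤ ‖v‖ ∧ ‖v‖ ≤ (n : ℝ) ^ 2}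
              (fun v => Real.exp (-α * ‖v‖ ^ 2)) v) /
          (∫ v : EuclideanSpace ℝ (Fin N),
            Set.indicator {v : EuclideanSpace ℝ (Fin N) | (n : ℝ) ≤ ‖v‖ ∧ ‖v‖ ≤ (n : ℝ) ^ 2}
              (fun v => Real.exp (-α * ‖v‖ ^ 2)) v)) / (n : ℝ) ^ 2)
      atTop (nhds 1) := by
  have : Nonempty (Fin N) := ⟨⟨0, hN⟩⟩
  have key := (tendsto_shellGaussianMeanSqNorm_div_sq
    (volume : Measure (EuclideanSpace ℝ (Fin N))) hα).comp tendsto_natCast_atTop_atTop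
  have hshell (n : ℕ) : {v : EuclideanSpace ℝ (Fin N) | (n : ℝ) ≤ ‖v‖ ∧ ‖v‖ ≤ (n : ℝ) ^ 2} =
      shell (n : ℝ) ((n : ℝ) ^ 2) := rfl
  simp_rw [← Set.indicator_mul_right _ (fun v : EuclideanSpace ℝ (Fin N) => ‖v‖ ^ 2), hshell,
    integral_indicator (isClosed_shell _ _).measurableSet]
  exact key
end

section
/- Let N ≥ 2, a ∈ ℝ with a < N, and δ ≥ 0 with 2δ + a > N. There exists a constant C = C(N, a, δ) such that for all x ∈ ℝ^N with |x| ≥ 2, ∫_{|y| ≤ |x|/2} |y|^(-a) · (1 + |y + x|²)^(-δ) dy ≤ C · |x|^(N - a - 2δ). -/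
open MeasureTheory Metric Set Module
open scoped ENNReal

local notation "𝔼" N => EuclideanSpace ℝ (Fin N)

private lemma finrank_eq (N : ℕ) : finrank ℝ (𝔼 N) = N := by
  simp [finrank_euclideanSpace]

private lemma integrableOn_rpow_ball (N : ℕ) (hN : 1 ≤ N) (a : ℝ) (ha : a < N) (R : ℝ) :
    IntegrableOn (fun y : 𝔼 N => ‖y‖ ^ (-a)) (closedBall 0 R) := by
  rcases le_or_gt a 0 with h0 | h0
  · have hc : Continuous fun y : 𝔼 N => ‖y‖ ^ (-a) :=
      continuous_norm.rpow_const (fun y => Or.inr (by linarith))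
    exact hc.continuousOn.integrableOn_compact (isCompact_closedBall _ _)
  have hm : Measurable fun y : 𝔼 N => ‖y‖ ^ (-a) := by fun_prop
  refine ⟨hm.aestronglyMeasurable, ?_⟩
  rw [hasFiniteIntegral_iff_ofReal (Filter.Eventually.of_forall fun y =>
    Real.rpow_nonneg (norm_nonneg _) _)]
  set μ : Measure (𝔼 N) := volume.restrict (closedBall 0 R)
  have f_nn : 0 ≤ᵐ[μ] fun y : 𝔼 N => ‖y‖ ^ (-a) :=
    Filter.Eventually.of_forall fun y => Real.rpow_nonneg (norm_nonneg _) _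
  have f_mble : AEMeasurable (fun y : 𝔼 N => ‖y‖ ^ (-a)) μ := hm.aemeasurable
  rw [lintegral_eq_lintegral_meas_le μ f_nn f_mble]
  have key : ∀ t : ℝ, 0 < t →
      {y : 𝔼 N | t ≤ ‖y‖ ^ (-a)} ⊆ closedBall 0 (t ^ (-a⁻¹)) := by
    intro t ht y hy
    simp only [mem_setOf_eq] at hy
    have hy0 : 0 < ‖y‖ := by
      by_contra hc
      push_neg at hc
      have h00 : ‖y‖ = 0 := le_antisymm hc (norm_nonneg _)
      rw [h00, Real.zero_rpow (neg_ne_zero.mpr h0.ne')] at hy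
      linarith
    have := Real.rpow_le_rpow_of_nonpos ht hy (neg_nonpos.mpr (inv_nonneg.mpr h0.le))
    rw [← Real.rpow_mul hy0.le, neg_mul_neg, mul_inv_cancel₀ h0.ne', Real.rpow_one] at this
    simpa [mem_closedBall_zero_iff] using this
  calc
    ∫⁻ t in Ioi (0:ℝ), μ {y | t ≤ ‖y‖ ^ (-a)}
      ≤ ∫⁻ t in Ioc (0:ℝ) 1 ∪ Ioi 1, μ {y | t ≤ ‖y‖ ^ (-a)} :=
        lintegral_mono_set Ioi_subset_Ioc_union_Ioi
    _ ≤ (∫⁻ t in Ioc (0:ℝ) 1, μ {y | t ≤ ‖y‖ ^ (-a)}) +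
        ∫⁻ t in Ioi (1:ℝ), μ {y | t ≤ ‖y‖ ^ (-a)} := lintegral_union_le _ _ _
    _ < ∞ := by
      refine ENNReal.add_lt_top.2 ⟨?_, ?_⟩
      · calc
          ∫⁻ t in Ioc (0:ℝ) 1, μ {y | t ≤ ‖y‖ ^ (-a)}
            ≤ ∫⁻ _ in Ioc (0:ℝ) 1, volume (closedBall (0 : 𝔼 N) R) := by
              refine setLIntegral_mono' measurableSet_Ioc fun t ht => ?_
              refine le_trans (measure_mono (subset_univ _)) (le_of_eq ?_)
              simp [μ]
          _ = volume (closedBall (0 : 𝔼 N) R) * volume (Ioc (0:ℝ) 1) := setLIntegral_const _ _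
          _ < ∞ := ENNReal.mul_lt_top measure_closedBall_lt_top (by simp)
      · have hlt : ∫⁻ t in Ioi (1:ℝ), μ {y | t ≤ ‖y‖ ^ (-a)} ≤
            ∫⁻ t in Ioi (1:ℝ), ENNReal.ofReal (t ^ (-a⁻¹ * N)) *
              volume (ball (0 : 𝔼 N) 1) := by
          refine setLIntegral_mono' measurableSet_Ioi fun t ht => ?_
          have ht0 : (0:ℝ) < t := lt_trans one_pos ht
          have h1 : μ {y | t ≤ ‖y‖ ^ (-a)} ≤ volume (closedBall (0 : 𝔼 N) (t ^ (-a⁻¹))) :=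
            le_trans (Measure.restrict_apply_le _ _) (measure_mono (key t ht0))
          rw [Measure.addHaar_closedBall _ _ (Real.rpow_nonneg ht0.le _)] at h1
          rw [← Real.rpow_natCast (t ^ (-a⁻¹)) _, ← Real.rpow_mul ht0.le, finrank_eq] at h1
          exact h1
        refine lt_of_le_of_lt hlt ?_
        rw [lintegral_mul_const' _ _ measure_ball_lt_top.ne]
        refine ENNReal.mul_lt_top ?_ measure_ball_lt_top
        refine IntegrableOn.setLIntegral_lt_top ?_
        refine integrableOn_Ioi_rpow_of_lt ?_ one_pos
        rw [neg_mul, neg_lt_neg_iff]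
        rw [lt_inv_mul_iff₀ h0]
        · simpa using ha

private lemma scaling (N : ℕ) (a : ℝ) {R : ℝ} (hR : 0 < R) :
    ∫ y in closedBall (0 : 𝔼 N) R, ‖y‖ ^ (-a) =
      R ^ ((N : ℝ) - a) * ∫ y in closedBall (0 : 𝔼 N) 1, ‖y‖ ^ (-a) := by
  have h := MeasureTheory.Measure.setIntegral_comp_smul_of_pos (volume : Measure (𝔼 N))
    (fun y => ‖y‖ ^ (-a)) (closedBall 0 1) hR
  rw [_root_.smul_closedBall _ _ zero_le_one, smul_zero, Real.norm_eq_abs, abs_of_pos hR,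
    mul_one] at h
  have h2 : ∀ y : 𝔼 N, ‖R • y‖ ^ (-a) = R ^ (-a) * ‖y‖ ^ (-a) := by
    intro y
    rw [norm_smul, Real.norm_eq_abs, abs_of_pos hR, Real.mul_rpow hR.le (norm_nonneg _)]
  simp only [h2] at h
  rw [integral_const_mul, finrank_eq, smul_eq_mul] at h
  have hRN : (0:ℝ) < R ^ N := pow_pos hR N
  have key : (∫ y in closedBall (0 : 𝔼 N) R, ‖y‖ ^ (-a)) =
      R ^ N * (R ^ (-a) * ∫ y in closedBall (0 : 𝔼 N) 1, ‖y‖ ^ (-a)) := by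
    rw [h, ← mul_assoc, mul_inv_cancel₀ hRN.ne', one_mul]
  rw [key, ← mul_assoc, ← Real.rpow_natCast R N, ← Real.rpow_add hR, ← sub_eq_add_neg]

theorem stmt_16 (N : ℕ) (hN : 2 ≤ N) (a δ : ℝ) (ha : a < N) (hδ : 0 ≤ δ)
    (h : (N : ℝ) < 2 * δ + a) :
    ∃ C : ℝ, ∀ x : EuclideanSpace ℝ (Fin N), 2 ≤ ‖x‖ →
      (∫ y in {y : EuclideanSpace ℝ (Fin N) | ‖y‖ ≤ ‖x‖ / 2},
          ‖y‖ ^ (-a) * (1 + ‖y + x‖ ^ 2) ^ (-δ)) ≤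
        C * ‖x‖ ^ ((N : ℝ) - a - 2 * δ) := by
  set K := ∫ y in closedBall (0 : 𝔼 N) 1, ‖y‖ ^ (-a) with hK
  refine ⟨K / 2 ^ ((N:ℝ) - a - 2*δ), fun x hx => ?_⟩
  have hx0 : (0:ℝ) < ‖x‖ := lt_of_lt_of_le two_pos hx
  set R : ℝ := ‖x‖ / 2 with hRdef
  have hR1 : (1:ℝ) ≤ R := by rw [hRdef]; linarith
  have hR0 : (0:ℝ) < R := lt_of_lt_of_le one_pos hR1
  have hset : {y : 𝔼 N | ‖y‖ ≤ ‖x‖ / 2} = closedBall (0 : 𝔼 N) R := by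
    ext y
    simp [Metric.mem_closedBall, dist_zero_right, hRdef]
  rw [hset]
  have hint : IntegrableOn (fun y : 𝔼 N => ‖y‖ ^ (-a)) (closedBall 0 R) :=
    integrableOn_rpow_ball N (by omega) a ha R
  have step1 : (∫ y in closedBall (0 : 𝔼 N) R, ‖y‖ ^ (-a) * (1 + ‖y + x‖ ^ 2) ^ (-δ))
      ≤ ∫ y in closedBall (0 : 𝔼 N) R, R ^ (-(2*δ)) * ‖y‖ ^ (-a) := by
    refine integral_mono_of_nonneg ?_ (hint.const_mul _) ?_
    · exact Filter.Eventually.of_forall fun y =>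
        mul_nonneg (Real.rpow_nonneg (norm_nonneg _) _) (Real.rpow_nonneg (by positivity) _)
    · rw [Filter.EventuallyLE, ae_restrict_iff' measurableSet_closedBall]
      refine Filter.Eventually.of_forall fun y hy => ?_
      rw [mem_closedBall_zero_iff] at hy
      have h1 : R ≤ ‖y + x‖ := by
        have h5 := norm_sub_norm_le x (-y)
        rw [sub_neg_eq_add, norm_neg, add_comm x y] at h5
        rw [hRdef] at hy ⊢
        linarith
      have h2 : R ^ 2 ≤ 1 + ‖y + x‖ ^ 2 := by nlinarith [norm_nonneg (y + x)]
      have h3 : (1 + ‖y + x‖ ^ 2) ^ (-δ) ≤ (R ^ 2) ^ (-δ) :=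
        Real.rpow_le_rpow_of_nonpos (by positivity) h2 (neg_nonpos.mpr hδ)
      have h4 : ((R : ℝ) ^ 2) ^ (-δ) = R ^ (-(2*δ)) := by
        rw [← Real.rpow_natCast R 2, ← Real.rpow_mul hR0.le]
        congr 1
        push_cast
        ring
      calc ‖y‖ ^ (-a) * (1 + ‖y + x‖ ^ 2) ^ (-δ)
          ≤ ‖y‖ ^ (-a) * R ^ (-(2*δ)) :=
            mul_le_mul_of_nonneg_left (h4 ▸ h3) (Real.rpow_nonneg (norm_nonneg _) _)
        _ = R ^ (-(2*δ)) * ‖y‖ ^ (-a) := mul_comm _ _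
  have step2 : (∫ y in closedBall (0 : 𝔼 N) R, R ^ (-(2*δ)) * ‖y‖ ^ (-a))
      = R ^ ((N:ℝ) - a - 2*δ) * K := by
    rw [integral_const_mul, scaling N a hR0, ← hK, ← mul_assoc, ← Real.rpow_add hR0,
      show -(2*δ) + ((N:ℝ) - a) = (N:ℝ) - a - 2*δ by ring]
  refine step1.trans (le_of_eq ?_)
  rw [step2, hRdef, Real.div_rpow (norm_nonneg x) (by norm_num : (0:ℝ) ≤ 2)]
  ring
end
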